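/- arXiv:1910.05368 — 2 statements merged into one kernel-verified Lean document; each statement's English description precedes it below -/
import Mathlib

section
/- For a classical-quantum state ρ_{AE} = (1/N)|0⟩⟨0|_A ⊗ |E₀⟩⟨E₀| + (1/N)|1⟩⟨1|_A ⊗ |E₁⟩⟨E₁| with N = ⟨E₀|E₀⟩ + ⟨E₁|E₁⟩, writing N⁰ = ⟨E₀|E₀⟩ > 0 and N¹ = ⟨E₁|E₁⟩ > 0, the conditional von Neumann entropy satisfies S(A|E) ≥ h(N⁰/(N⁰+N¹)) − h(λ), where λ = (1/2)(1 + √((N⁰−N¹)² + 4·Re²⟨E₀|E₁⟩)/(N⁰+N¹)) and h is the binary Shannon entropy. -/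
/-- Binary Shannon entropy (base 2). -/
noncomputable def binEnt (x : ℝ) : ℝ :=
  -(x * Real.logb 2 x) - (1 - x) * Real.logb 2 (1 - x)

/-- Von Neumann entropy (base 2) of a Hermitian matrix, via its eigenvalues. -/
noncomputable def vNE {n : Type*} [Fintype n] [DecidableEq n] {ρ : Matrix n n ℂ}
    (h : ρ.IsHermitian) : ℝ :=
  -∑ i, h.eigenvalues i * Real.logb 2 (h.eigenvalues i)

/-!
Both states have the form `ρ = N⁻¹ • V * Vᴴ` for a matrix `V` with two columns: `|b⟩ ⊗ E_b` for
`ρ_AE` and `E_b` for `ρ_E`. Hence each has at most two nonzero eigenvalues, and these are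
determined by `tr ρ = 1` and `tr ρ² = N⁻² tr (Vᴴ V)²`, where `Vᴴ V` is a `2 × 2` Gram matrix.
This gives `S(ρ_AE) = h(N⁰/N)` and `S(ρ_E) = h(μ)`, with `μ` the larger eigenvalue of the
normalized Gram matrix of `E₀, E₁`. Finally `1/2 ≤ λ ≤ μ ≤ 1`, since `λ` is `μ` with
`|⟨E₀|E₁⟩|²` replaced by `Re²⟨E₀|E₁⟩` and `μ ≤ 1` is Cauchy–Schwarz, and `h` is decreasing
on `[1/2, 1]`.
-/

open Matrix Finset

lemma eq_and_eq_or_eq_and_eq_of_add_eq_of_sq_add_sq_eq {x y a b : ℝ} (hs : x + y = a + b)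
    (hq : x ^ 2 + y ^ 2 = a ^ 2 + b ^ 2) : (x = a ∧ y = b) ∨ (x = b ∧ y = a) := by
  have hprod : x * y = a * b := by linear_combination (x + y + a + b) / 2 * hs - hq / 2
  have : (x - a) * (x - b) = 0 := by linear_combination x * hs - hprod
  rcases mul_eq_zero.mp this with h | h
  · exact Or.inl ⟨by linarith, by linarith⟩
  · exact Or.inr ⟨by linarith, by linarith⟩

lemma exists_sum_comp_eq_add_of_card_support_le_two {ι : Type*} [Fintype ι] (f : ι → ℝ)
    (hf : #{i | f i ≠ 0} ≤ 2) :
    ∃ x y : ℝ, ∀ g : ℝ → ℝ, g 0 = 0 → ∑ i, g (f i) = g x + g y := by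
  have hsupp : ∀ g : ℝ → ℝ, g 0 = 0 → ∑ i, g (f i) = ∑ i with f i ≠ 0, g (f i) :=
    fun g hg ↦ (sum_filter_of_ne (p := fun i ↦ f i ≠ 0) fun i _ hi hfi ↦ hi (by rw [hfi, hg])).symm
  interval_cases hcard : #{i | f i ≠ 0}
  · refine ⟨0, 0, fun g hg ↦ ?_⟩
    rw [hsupp g hg, card_eq_zero.mp hcard, sum_empty, hg, add_zero]
  · obtain ⟨i, hi⟩ := card_eq_one.mp hcard
    refine ⟨f i, 0, fun g hg ↦ ?_⟩
    rw [hsupp g hg, hi, sum_singleton, hg, add_zero]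
  · classical
    obtain ⟨i, j, hij, hi⟩ := card_eq_two.mp hcard
    exact ⟨f i, f j, fun g hg ↦ by rw [hsupp g hg, hi, sum_pair hij]⟩

lemma Matrix.IsHermitian.trace_mul_self_eq_sum_eigenvalues_sq {𝕜 n : Type*} [RCLike 𝕜]
    [Fintype n] [DecidableEq n] {A : Matrix n n 𝕜} (hA : A.IsHermitian) :
    (A * A).trace = ∑ i, ((hA.eigenvalues i ^ 2 : ℝ) : 𝕜) := by
  conv_lhs => rw [hA.spectral_theorem, ← map_mul, Unitary.conjStarAlgAut_apply, trace_mul_cycle,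
    Unitary.coe_star_mul_self, one_mul, diagonal_mul_diagonal, trace_diagonal]
  simp [sq]

lemma vNE_eq_binEnt_of_rank_le_two {n : Type*} [Fintype n] [DecidableEq n] {ρ : Matrix n n ℂ}
    (hρ : ρ.IsHermitian) (hrank : ρ.rank ≤ 2) {a : ℝ} (htr : ρ.trace = 1)
    (htr2 : (ρ * ρ).trace = ((a ^ 2 + (1 - a) ^ 2 : ℝ) : ℂ)) :
    vNE hρ = binEnt a := by
  obtain ⟨x, y, hxy⟩ := exists_sum_comp_eq_add_of_card_support_le_two hρ.eigenvalues <| by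
    rwa [← Fintype.card_subtype, ← hρ.rank_eq_card_non_zero_eigs]
  have hs : x + y = a + (1 - a) := by
    have h := hρ.trace_eq_sum_eigenvalues
    rw [htr, ← RCLike.ofReal_sum, show ∑ i, hρ.eigenvalues i = x + y from hxy id rfl] at h
    linear_combination -RCLike.ofReal_inj.mp (RCLike.ofReal_one.trans h)
  have hq : x ^ 2 + y ^ 2 = a ^ 2 + (1 - a) ^ 2 := by
    have h := hρ.trace_mul_self_eq_sum_eigenvalues_sq
    rw [htr2, ← RCLike.ofReal_sum,
      show ∑ i, hρ.eigenvalues i ^ 2 = x ^ 2 + y ^ 2 from hxy (· ^ 2) (zero_pow two_ne_zero)] at h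
    exact RCLike.ofReal_inj.mp h.symm
  rw [vNE, hxy (fun t ↦ t * Real.logb 2 t) (zero_mul _), binEnt]
  rcases eq_and_eq_or_eq_and_eq_of_add_eq_of_sq_add_sq_eq hs hq with ⟨rfl, rfl⟩ | ⟨rfl, rfl⟩ <;>
    ring

lemma binEnt_eq_binEntropy_div_log_two : binEnt = fun x ↦ Real.binEntropy x / Real.log 2 := by
  ext x
  rw [binEnt, Real.binEntropy, Real.logb, Real.logb, Real.log_inv, Real.log_inv]
  ring

lemma binEnt_antitoneOn : AntitoneOn binEnt (Set.Icc 2⁻¹ 1) := by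
  rw [binEnt_eq_binEntropy_div_log_two]
  intro x hx y hy hxy
  exact div_le_div_of_nonneg_right (Real.binEntropy_strictAntiOn.antitoneOn hx hy hxy)
    (Real.log_nonneg one_le_two)

section GramTrace

variable {𝕜 m n : Type*} [RCLike 𝕜] [Fintype m] [Fintype n]

lemma rank_smul_mul_conjTranspose_le (c : 𝕜) (V : Matrix m n 𝕜) :
    (c • (V * Vᴴ)).rank ≤ Fintype.card n := by
  rw [← Matrix.mul_smul]
  exact (rank_mul_le_right _ _).trans (rank_le_card_height _)

lemma trace_smul_mul_conjTranspose (c : 𝕜) (V : Matrix m n 𝕜) :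
    (c • (V * Vᴴ)).trace = c * (Vᴴ * V).trace := by
  rw [trace_smul, trace_mul_comm, smul_eq_mul]

lemma trace_sq_smul_mul_conjTranspose (c : 𝕜) (V : Matrix m n 𝕜) :
    (c • (V * Vᴴ) * c • (V * Vᴴ)).trace = c ^ 2 * (Vᴴ * V * (Vᴴ * V)).trace := by
  rw [smul_mul_smul_comm, trace_smul, smul_eq_mul, sq, Matrix.mul_assoc, trace_mul_comm]
  simp only [Matrix.mul_assoc]

end GramTrace

lemma trace_mul_self_fin_two {R : Type*} [CommRing R] (M : Matrix (Fin 2) (Fin 2) R) :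
    (M * M).trace = M 0 0 ^ 2 + M 1 1 ^ 2 + 2 * (M 0 1 * M 1 0) := by
  simp only [trace_fin_two, mul_apply, Fin.sum_univ_two]
  ring

/-- The larger eigenvalue of `!![N0, z; conj z, N1] / (N0 + N1)` when `‖z‖ ^ 2 = r`. -/
noncomputable def largerEigenvalue (N0 N1 r : ℝ) : ℝ :=
  1 / 2 * (1 + Real.sqrt ((N0 - N1) ^ 2 + 4 * r) / (N0 + N1))

section LargerEigenvalue

variable {N0 N1 : ℝ}

lemma half_le_largerEigenvalue (hN : 0 ≤ N0 + N1) (r : ℝ) : 2⁻¹ ≤ largerEigenvalue N0 N1 r := by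
  have := div_nonneg (Real.sqrt_nonneg ((N0 - N1) ^ 2 + 4 * r)) hN
  rw [largerEigenvalue]
  linarith

lemma largerEigenvalue_monotone (hN : 0 ≤ N0 + N1) : Monotone (largerEigenvalue N0 N1) := by
  intro r r' hr
  unfold largerEigenvalue
  gcongr

lemma largerEigenvalue_le_one (hN : 0 < N0 + N1) {r : ℝ} (hr : r ≤ N0 * N1) :
    largerEigenvalue N0 N1 r ≤ 1 := by
  have : Real.sqrt ((N0 - N1) ^ 2 + 4 * r) ≤ N0 + N1 :=
    Real.sqrt_le_iff.mpr ⟨hN.le, by nlinarith⟩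
  have := (div_le_one hN).mpr this
  rw [largerEigenvalue]
  linarith

lemma largerEigenvalue_sq_add_one_sub_sq (hN : 0 < N0 + N1) {r : ℝ} (hr : 0 ≤ r) :
    largerEigenvalue N0 N1 r ^ 2 + (1 - largerEigenvalue N0 N1 r) ^ 2
      = (N0 ^ 2 + N1 ^ 2 + 2 * r) / (N0 + N1) ^ 2 := by
  have hsq := Real.sq_sqrt (by positivity : 0 ≤ (N0 - N1) ^ 2 + 4 * r)
  rw [largerEigenvalue]
  field_simp
  linear_combination 2 * hsq

end LargerEigenvalue

section ColMatrix

variable {ι n : Type*} (E : ι → EuclideanSpace ℂ n)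

def colMatrix : Matrix n ι ℂ := of fun i b ↦ E b i

def blockColMatrix [DecidableEq ι] : Matrix (ι × n) ι ℂ :=
  of fun p b ↦ if p.1 = b then E b p.2 else 0

lemma colMatrix_mul_conjTranspose_apply [Fintype ι] (i j : n) :
    (colMatrix E * (colMatrix E)ᴴ) i j = ∑ b, E b i * star (E b j) := by
  simp [colMatrix, mul_apply]

lemma blockColMatrix_mul_conjTranspose_apply [Fintype ι] [DecidableEq ι] (p q : ι × n) :
    (blockColMatrix E * (blockColMatrix E)ᴴ) p q
      = if p.1 = q.1 then E p.1 p.2 * star (E p.1 q.2) else 0 := by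
  by_cases h : p.1 = q.1
  · simp [blockColMatrix, mul_apply, h]
  · simp [blockColMatrix, mul_apply, h, Ne.symm h]

variable [Fintype n]

lemma conjTranspose_colMatrix_mul : (colMatrix E)ᴴ * colMatrix E = gram ℂ E := by
  ext b b'
  simp [colMatrix, mul_apply, PiLp.inner_apply, mul_comm]

lemma conjTranspose_blockColMatrix_mul [Fintype ι] [DecidableEq ι] :
    (blockColMatrix E)ᴴ * blockColMatrix E = diagonal fun b ↦ inner ℂ (E b) (E b) := by
  ext b b'
  rw [mul_apply, Fintype.sum_prod_type, Finset.sum_eq_single b]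
  · rcases eq_or_ne b b' with rfl | hbb'
    · simp [blockColMatrix, PiLp.inner_apply, mul_comm, -inner_self_eq_norm_sq_to_K]
    · simp [blockColMatrix, hbb']
  · intro c _ hc
    simp [blockColMatrix, hc]
  · simp

end ColMatrix

section TwoVectors

variable {n : Type*} [Fintype n] [DecidableEq n] (E : Fin 2 → EuclideanSpace ℂ n)

lemma vNE_eq_binEnt_of_eq_smul_blockColMatrix (hN : 0 < ‖E 0‖ ^ 2 + ‖E 1‖ ^ 2)
    {ρ : Matrix (Fin 2 × n) (Fin 2 × n) ℂ} (hρ : ρ.IsHermitian)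
    (h : ρ = ((‖E 0‖ ^ 2 + ‖E 1‖ ^ 2 : ℝ) : ℂ)⁻¹ • (blockColMatrix E * (blockColMatrix E)ᴴ)) :
    vNE hρ = binEnt (‖E 0‖ ^ 2 / (‖E 0‖ ^ 2 + ‖E 1‖ ^ 2)) := by
  have hN' : ((‖E 0‖ ^ 2 + ‖E 1‖ ^ 2 : ℝ) : ℂ) ≠ 0 := by exact_mod_cast hN.ne'
  subst h
  apply vNE_eq_binEnt_of_rank_le_two
  · exact (rank_smul_mul_conjTranspose_le _ _).trans (by simp)
  · rw [trace_smul_mul_conjTranspose, conjTranspose_blockColMatrix_mul, trace_fin_two]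
    simp only [diagonal_apply_eq, inner_self_eq_norm_sq_to_K]
    push_cast at hN' ⊢
    exact inv_mul_cancel₀ hN'
  · rw [trace_sq_smul_mul_conjTranspose, conjTranspose_blockColMatrix_mul, diagonal_mul_diagonal,
      trace_diagonal, Fin.sum_univ_two]
    simp only [inner_self_eq_norm_sq_to_K, RCLike.ofReal_eq_complex_ofReal]
    push_cast at hN' ⊢
    field_simp
    ring

lemma vNE_eq_binEnt_of_eq_smul_colMatrix (hN : 0 < ‖E 0‖ ^ 2 + ‖E 1‖ ^ 2)
    {ρ : Matrix n n ℂ} (hρ : ρ.IsHermitian)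
    (h : ρ = ((‖E 0‖ ^ 2 + ‖E 1‖ ^ 2 : ℝ) : ℂ)⁻¹ • (colMatrix E * (colMatrix E)ᴴ)) :
    vNE hρ = binEnt (largerEigenvalue (‖E 0‖ ^ 2) (‖E 1‖ ^ 2) (‖inner ℂ (E 0) (E 1)‖ ^ 2)) := by
  have hN' : ((‖E 0‖ ^ 2 + ‖E 1‖ ^ 2 : ℝ) : ℂ) ≠ 0 := by exact_mod_cast hN.ne'
  subst h
  apply vNE_eq_binEnt_of_rank_le_two
  · exact (rank_smul_mul_conjTranspose_le _ _).trans (by simp)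
  · rw [trace_smul_mul_conjTranspose, conjTranspose_colMatrix_mul, trace_fin_two]
    simp only [gram_apply, inner_self_eq_norm_sq_to_K]
    push_cast at hN' ⊢
    exact inv_mul_cancel₀ hN'
  · rw [trace_sq_smul_mul_conjTranspose, conjTranspose_colMatrix_mul, trace_mul_self_fin_two,
      largerEigenvalue_sq_add_one_sub_sq hN (sq_nonneg _)]
    simp only [gram_apply, inner_self_eq_norm_sq_to_K]
    rw [← inner_conj_symm (E 1) (E 0), RCLike.mul_conj]
    simp only [RCLike.ofReal_eq_complex_ofReal]
    push_cast at hN' ⊢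
    field_simp

end TwoVectors

/-- single-term case of the Tomamichel–Krawec key-rate theorem.
For the cq state ρ_{AE} = (1/N)(|0⟩⟨0|⊗|E₀⟩⟨E₀| + |1⟩⟨1|⊗|E₁⟩⟨E₁|),
S(A|E) ≥ h(N⁰/(N⁰+N¹)) − h(λ). -/
theorem cq_conditional_entropy_lower_bound {d : ℕ}
    (E : Fin 2 → EuclideanSpace ℂ (Fin d))
    (N0 N1 : ℝ) (hN0 : N0 = ‖E 0‖ ^ 2) (hN1 : N1 = ‖E 1‖ ^ 2)
    (h0 : 0 < N0) (h1 : 0 < N1)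
    (ρAE : Matrix (Fin 2 × Fin d) (Fin 2 × Fin d) ℂ)
    (hρAE : ρAE = Matrix.of fun p q =>
      if p.1 = q.1 then (((N0 + N1 : ℝ) : ℂ))⁻¹ * E p.1 p.2 * star (E p.1 q.2) else 0)
    (hAE : ρAE.IsHermitian)
    (ρE : Matrix (Fin d) (Fin d) ℂ)
    (hρE : ρE = Matrix.of fun i j =>
      (((N0 + N1 : ℝ) : ℂ))⁻¹ * (E 0 i * star (E 0 j) + E 1 i * star (E 1 j)))
    (hE : ρE.IsHermitian)
    (lam : ℝ)
    (hlam : lam = 1 / 2 * (1 + Real.sqrt ((N0 - N1) ^ 2 +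
      4 * ((inner ℂ (E 0) (E 1) : ℂ).re) ^ 2) / (N0 + N1))) :
    vNE hAE - vNE hE ≥ binEnt (N0 / (N0 + N1)) - binEnt lam := by
  subst hN0 hN1 hlam
  have hN : 0 < ‖E 0‖ ^ 2 + ‖E 1‖ ^ 2 := add_pos h0 h1
  have hSAE := vNE_eq_binEnt_of_eq_smul_blockColMatrix E hN hAE <| by
    ext p q
    rw [hρAE, of_apply, Matrix.smul_apply, blockColMatrix_mul_conjTranspose_apply, smul_eq_mul,
      mul_ite, mul_zero, mul_assoc]
  have hSE := vNE_eq_binEnt_of_eq_smul_colMatrix E hN hE <| by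
    ext i j
    rw [hρE, of_apply, Matrix.smul_apply, colMatrix_mul_conjTranspose_apply, Fin.sum_univ_two,
      smul_eq_mul]
  set g := inner ℂ (E 0) (E 1)
  have hre : g.re ^ 2 ≤ ‖g‖ ^ 2 := sq_le_sq.mpr ((Complex.abs_re_le_norm g).trans (le_abs_self _))
  have hCS : ‖g‖ ^ 2 ≤ ‖E 0‖ ^ 2 * ‖E 1‖ ^ 2 := by
    rw [← mul_pow]
    exact pow_le_pow_left₀ (norm_nonneg _) (norm_inner_le_norm _ _) 2
  have hlam_le := largerEigenvalue_monotone hN.le hre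
  have hμ_le := largerEigenvalue_le_one hN hCS
  have hbinEnt := binEnt_antitoneOn ⟨half_le_largerEigenvalue hN.le _, hlam_le.trans hμ_le⟩
    ⟨half_le_largerEigenvalue hN.le _, hμ_le⟩ hlam_le
  rw [hSAE, hSE]
  exact sub_le_sub_left hbinEnt _
end

section
/- In the Cerf-style individual-attack key rate for the two-state SQKD protocol, with I(A:B) = 1 − h(Q) and I(A:E) = 1 − h((1+x)/2) where x = 2√(Q_X(1−Q_X)), setting Q_X = Q the key rate r(Q) = I(A:B) − I(A:E) = h((1+2√(Q(1−Q)))/2) − h(Q) is strictly positive for Q ∈ (0, q*) and strictly negative for Q ∈ (q*, 1/2), for a unique q* ∈ (0.14, 0.15) (i.e., the noise tolerance is ≈14.6%). -/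
/- ### Auxiliary lemmas -/

lemma log_one_sub_bounds {x : ℝ} (hx0 : 0 ≤ x) (hx1 : x < 1) (n : ℕ) :
    -(∑ i ∈ Finset.range n, x ^ (i + 1) / (i + 1)) - x ^ (n + 1) / (1 - x) ≤ Real.log (1 - x) ∧
    Real.log (1 - x) ≤ -(∑ i ∈ Finset.range n, x ^ (i + 1) / (i + 1)) + x ^ (n + 1) / (1 - x) := by
  have h := Real.abs_log_sub_add_sum_range_le (x := x) (by rwa [abs_of_nonneg hx0]) n
  rw [abs_of_nonneg hx0, abs_le] at h
  constructor <;> linarith [h.1, h.2]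

lemma log_one_add_bounds {y : ℝ} (hy0 : 0 ≤ y) (hy1 : y < 1) (n : ℕ) :
    -(∑ i ∈ Finset.range n, (-y) ^ (i + 1) / (i + 1)) - y ^ (n + 1) / (1 - y) ≤ Real.log (1 + y) ∧
    Real.log (1 + y) ≤ -(∑ i ∈ Finset.range n, (-y) ^ (i + 1) / (i + 1)) + y ^ (n + 1) / (1 - y) := by
  have habs : |(-y)| = y := by rw [abs_neg, abs_of_nonneg hy0]
  have h := Real.abs_log_sub_add_sum_range_le (x := -y) (by rw [habs]; exact hy1) n
  rw [habs, abs_le, show (1 : ℝ) - -y = 1 + y by ring] at h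
  constructor <;> linarith [h.1, h.2]

/- numeric one-sided bounds on logarithms -/

lemma log_ub_847 : Real.log 0.847 ≤ -0.166051 := by
  have h := (log_one_sub_bounds (x := 0.153) (by norm_num) (by norm_num) 6).2
  simp only [Finset.sum_range_succ, Finset.sum_range_zero] at h
  norm_num at h; linarith

lemma log_lb_86 : -0.150824 ≤ Real.log 0.86 := by
  have h := (log_one_sub_bounds (x := 0.14) (by norm_num) (by norm_num) 6).1
  simp only [Finset.sum_range_succ, Finset.sum_range_zero] at h
  norm_num at h; linarith

lemma log_lb_857 : -0.154319 ≤ Real.log 0.857 := by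
  have h := (log_one_sub_bounds (x := 0.143) (by norm_num) (by norm_num) 6).1
  simp only [Finset.sum_range_succ, Finset.sum_range_zero] at h
  norm_num at h; linarith

lemma log_ub_85 : Real.log 0.85 ≤ -0.162516 := by
  have h := (log_one_sub_bounds (x := 0.15) (by norm_num) (by norm_num) 6).2
  simp only [Finset.sum_range_succ, Finset.sum_range_zero] at h
  norm_num at h; linarith

lemma log_shift (a b : ℝ) (ha : a = b / 8) (hb : 0 < b) :
    Real.log a = Real.log b - 3 * Real.log 2 := by
  rw [ha, Real.log_div (by positivity) (by norm_num),
    show (8 : ℝ) = 2 ^ 3 by norm_num, Real.log_pow]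
  norm_num

lemma log_ub_153 : Real.log 0.153 ≤ -1.877315 := by
  have hs := log_shift 0.153 1.224 (by norm_num) (by norm_num)
  have h := (log_one_add_bounds (y := 0.224) (by norm_num) (by norm_num) 8).2
  simp only [Finset.sum_range_succ, Finset.sum_range_zero] at h
  norm_num at h
  have h2 := Real.log_two_gt_d9
  rw [hs]; linarith

lemma log_lb_14 : -1.966114 ≤ Real.log 0.14 := by
  have hs := log_shift 0.14 1.12 (by norm_num) (by norm_num)
  have h := (log_one_add_bounds (y := 0.12) (by norm_num) (by norm_num) 6).1
  simp only [Finset.sum_range_succ, Finset.sum_range_zero] at h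
  norm_num at h
  have h2 := Real.log_two_lt_d9
  rw [hs]; linarith

lemma log_lb_143 : -1.944913 ≤ Real.log 0.143 := by
  have hs := log_shift 0.143 1.144 (by norm_num) (by norm_num)
  have h := (log_one_add_bounds (y := 0.144) (by norm_num) (by norm_num) 6).1
  simp only [Finset.sum_range_succ, Finset.sum_range_zero] at h
  norm_num at h
  have h2 := Real.log_two_lt_d9
  rw [hs]; linarith

lemma log_ub_15 : Real.log 0.15 ≤ -1.897116 := by
  have hs := log_shift 0.15 1.2 (by norm_num) (by norm_num)
  have h := (log_one_add_bounds (y := 0.2) (by norm_num) (by norm_num) 7).2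
  simp only [Finset.sum_range_succ, Finset.sum_range_zero] at h
  norm_num at h
  have h2 := Real.log_two_gt_d9
  rw [hs]; linarith

/- binary entropy facts -/

lemma binEntropy_eq' (p : ℝ) :
    Real.binEntropy p = -(p * Real.log p) - (1 - p) * Real.log (1 - p) := by
  rw [Real.binEntropy, Real.log_inv, Real.log_inv]; ring

lemma binEnt_eq (x : ℝ) : binEnt x = Real.binEntropy x / Real.log 2 := by
  rw [binEnt, binEntropy_eq', Real.logb, Real.logb]; ring

lemma entA : Real.binEntropy 0.14 < Real.binEntropy 0.847 := by
  rw [binEntropy_eq', binEntropy_eq',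
    show (1 : ℝ) - 0.14 = 0.86 by norm_num, show (1 : ℝ) - 0.847 = 0.153 by norm_num]
  linarith [log_ub_847, log_ub_153, log_lb_14, log_lb_86]

lemma entB : Real.binEntropy 0.857 < Real.binEntropy 0.15 := by
  rw [binEntropy_eq', binEntropy_eq',
    show (1 : ℝ) - 0.15 = 0.85 by norm_num, show (1 : ℝ) - 0.857 = 0.143 by norm_num]
  linarith [log_lb_857, log_lb_143, log_ub_15, log_ub_85]

/- the key-rate function -/

noncomputable def rr (Q : ℝ) : ℝ :=
  binEnt ((1 + 2 * Real.sqrt (Q * (1 - Q))) / 2) - binEnt Q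

lemma log_two_pos' : (0 : ℝ) < Real.log 2 := Real.log_pos (by norm_num)

lemma g_mem {Q : ℝ} (h0 : 0 ≤ Q) (h1 : Q ≤ 1 / 2) :
    (1 + 2 * Real.sqrt (Q * (1 - Q))) / 2 ∈ Set.Icc (2⁻¹ : ℝ) 1 := by
  have hnn : 0 ≤ Q * (1 - Q) := by nlinarith
  have hs0 := Real.sqrt_nonneg (Q * (1 - Q))
  have hs2 := Real.sq_sqrt hnn
  have hs : Real.sqrt (Q * (1 - Q)) ≤ 1 / 2 := by nlinarith
  constructor <;> [linarith; linarith]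

lemma rr_anti {P Q : ℝ} (hP0 : 0 ≤ P) (hPQ : P < Q) (hQ : Q ≤ 1 / 2) : rr Q < rr P := by
  have hQ0 : 0 ≤ Q := le_of_lt (lt_of_le_of_lt hP0 hPQ)
  have hmul : P * (1 - P) < Q * (1 - Q) := by nlinarith
  have hsqrt : Real.sqrt (P * (1 - P)) < Real.sqrt (Q * (1 - Q)) :=
    Real.sqrt_lt_sqrt (by nlinarith) hmul
  have hgP := g_mem hP0 (le_of_lt (lt_of_lt_of_le hPQ hQ))
  have hgQ := g_mem hQ0 hQ
  have hglt : (1 + 2 * Real.sqrt (P * (1 - P))) / 2 < (1 + 2 * Real.sqrt (Q * (1 - Q))) / 2 := by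
    linarith
  have h1 : Real.binEntropy ((1 + 2 * Real.sqrt (Q * (1 - Q))) / 2) ≤
      Real.binEntropy ((1 + 2 * Real.sqrt (P * (1 - P))) / 2) :=
    le_of_lt (Real.binEntropy_strictAntiOn hgP hgQ hglt)
  have h2 : Real.binEntropy P < Real.binEntropy Q :=
    Real.binEntropy_strictMonoOn ⟨hP0, by norm_num; linarith⟩ ⟨hQ0, by norm_num; linarith⟩ hPQ
  rw [rr, rr, binEnt_eq, binEnt_eq, binEnt_eq, binEnt_eq]
  have hl2 := log_two_pos'
  rw [div_sub_div_same, div_sub_div_same, div_lt_div_iff_of_pos_right hl2]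
  linarith

lemma rr_14_pos : 0 < rr 0.14 := by
  have hg := g_mem (Q := 0.14) (by norm_num) (by norm_num)
  have hnn : (0 : ℝ) ≤ 0.14 * (1 - 0.14) := by norm_num
  have hs2 := Real.sq_sqrt hnn
  have hs0 := Real.sqrt_nonneg (0.14 * (1 - 0.14))
  have hlt : (1 + 2 * Real.sqrt (0.14 * (1 - 0.14))) / 2 < 0.847 := by nlinarith
  have h847 : (0.847 : ℝ) ∈ Set.Icc (2⁻¹ : ℝ) 1 := by constructor <;> norm_num
  have h1 : Real.binEntropy 0.847 <
      Real.binEntropy ((1 + 2 * Real.sqrt (0.14 * (1 - 0.14))) / 2) :=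
    Real.binEntropy_strictAntiOn hg h847 hlt
  rw [rr, binEnt_eq, binEnt_eq, div_sub_div_same]
  apply div_pos _ log_two_pos'
  linarith [entA]

lemma rr_15_neg : rr 0.15 < 0 := by
  have hg := g_mem (Q := 0.15) (by norm_num) (by norm_num)
  have hnn : (0 : ℝ) ≤ 0.15 * (1 - 0.15) := by norm_num
  have hs2 := Real.sq_sqrt hnn
  have hs0 := Real.sqrt_nonneg (0.15 * (1 - 0.15))
  have hlt : (0.857 : ℝ) < (1 + 2 * Real.sqrt (0.15 * (1 - 0.15))) / 2 := by nlinarith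
  have h857 : (0.857 : ℝ) ∈ Set.Icc (2⁻¹ : ℝ) 1 := by constructor <;> norm_num
  have h1 : Real.binEntropy ((1 + 2 * Real.sqrt (0.15 * (1 - 0.15))) / 2) <
      Real.binEntropy 0.857 :=
    Real.binEntropy_strictAntiOn h857 hg hlt
  rw [rr, binEnt_eq, binEnt_eq, div_sub_div_same]
  rw [div_neg_iff]
  right
  exact ⟨by linarith [entB], log_two_pos'⟩

lemma rr_continuous : Continuous rr := by
  have hb : Continuous binEnt := by
    have : binEnt = fun x => Real.binEntropy x / Real.log 2 := funext binEnt_eq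
    rw [this]
    exact Real.binEntropy_continuous.div_const _
  apply Continuous.sub
  · exact hb.comp <| by fun_prop
  · exact hb

/-- for the two-state SQKD protocol under individual attacks with
Q_X = Q, the key rate r(Q) = h((1+2√(Q(1−Q)))/2) − h(Q) has a unique zero
q* ∈ (0.14, 0.15), is positive on (0, q*) and negative on (q*, 1/2). -/
theorem two_state_individual_noise_tolerance (r : ℝ → ℝ)
    (hr : ∀ Q, r Q = binEnt ((1 + 2 * Real.sqrt (Q * (1 - Q))) / 2) - binEnt Q) :
    ∃ q : ℝ, q ∈ Set.Ioo (0.14 : ℝ) 0.15 ∧ r q = 0 ∧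
      (∀ Q, 0 < Q → Q < q → 0 < r Q) ∧
      (∀ Q, q < Q → Q < 1 / 2 → r Q < 0) ∧
      (∀ q', q' ∈ Set.Ioo (0.14 : ℝ) 0.15 → r q' = 0 → q' = q) := by
  have hrrr : ∀ Q, r Q = rr Q := fun Q => by rw [hr Q, rr]
  have hIVT := intermediate_value_Ioo' (a := (0.14 : ℝ)) (b := 0.15) (by norm_num)
    (rr_continuous.continuousOn)
  have h0mem : (0 : ℝ) ∈ Set.Ioo (rr 0.15) (rr 0.14) := ⟨rr_15_neg, rr_14_pos⟩
  obtain ⟨q, hq, hq0⟩ := hIVT h0mem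
  refine ⟨q, hq, by rw [hrrr, hq0], ?_, ?_, ?_⟩
  · intro Q hQ0 hQq
    rw [hrrr]
    have := rr_anti (le_of_lt hQ0) hQq (by linarith [hq.2]; )
    linarith [hq0 ▸ this]
  · intro Q hqQ hQ
    rw [hrrr]
    have := rr_anti (by linarith [hq.1]) hqQ (le_of_lt hQ)
    linarith [hq0 ▸ this]
  · intro q' hq' hrq'
    rw [hrrr] at hrq'
    rcases lt_trichotomy q' q with h | h | h
    · have := rr_anti (by linarith [hq'.1] : (0:ℝ) ≤ q') h (by linarith [hq.2])
      rw [hq0, hrq'] at this; exact absurd this (lt_irrefl 0)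
    · exact h
    · have := rr_anti (by linarith [hq.1] : (0:ℝ) ≤ q) h (by linarith [hq'.2])
      rw [hq0, hrq'] at this; exact absurd this (lt_irrefl 0)
end
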